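/- arXiv:1804.04442 — 2 statements merged into one kernel-verified Lean document; each statement's English description precedes it below -/
import Mathlib

section
/- Let Q ∈ F_q[X0,X1,X2] be a homogeneous factor of C of degree at least 2 that is irreducible over the algebraic closure of F_q. Then Q does not divide Φ_q(Q) = X0^q·∂Q/∂X0 + X1^q·∂Q/∂X1 + X2^q·∂Q/∂X2; that is, every nonlinear absolutely irreducible component of the curve C = 0 defined over F_q is F_q-Frobenius classical. -/
open MvPolynomial

/-- The polynomial `C = X0^d + X1^d + X2^d + (e0·X0 + e1·X1 + e2·X2)^d` over `F_q`. -/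
noncomputable def fermatSlice (F : Type) [Field F] (d : ℕ) (e0 e1 e2 : F) :
    MvPolynomial (Fin 3) F :=
  X 0 ^ d + X 1 ^ d + X 2 ^ d +
    (MvPolynomial.C e0 * X 0 + MvPolynomial.C e1 * X 1 + MvPolynomial.C e2 * X 2) ^ d

/-- `Φ_q(Q) = X0^q·∂Q/∂X0 + X1^q·∂Q/∂X1 + X2^q·∂Q/∂X2`. -/
noncomputable def Phi (F : Type) [Field F] (q : ℕ) (Q : MvPolynomial (Fin 3) F) :
    MvPolynomial (Fin 3) F :=
  X 0 ^ q * MvPolynomial.pderiv 0 Q + X 1 ^ q * MvPolynomial.pderiv 1 Q +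
    X 2 ^ q * MvPolynomial.pderiv 2 Q

/-!
Over `𝔽_q`, `q = 2d + 1`, the operator `Φ_q` is a derivation with `Φ_q(X_k) = X_k^q`, and also
`Φ_q(L) = L^q` for the linear form `L = e₀X₀ + e₁X₁ + e₂X₂` because its coefficients are fixed
by Frobenius. As `q + d - 1 = 3d`, this gives `Φ_q(C) = d (X₀^{3d} + X₁^{3d} + X₂^{3d} + L^{3d})`.
If `Q` divides both `C` and `Φ_q(Q)`, it divides `Φ_q(C)`, and since
`a³ + b³ + c³ + e³ ≡ -3 (a + b)(b + c)(a + c)` modulo `a + b + c + e`, it divides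
`(X₀^d + X₁^d)(X₁^d + X₂^d)(X₀^d + X₂^d)`. Over the algebraic closure `Q` is prime and every
`X_i^d + X_j^d` splits into linear forms, so `Q` would have degree at most one.
-/

section Phi

variable {F : Type} [Field F] (q : ℕ)

lemma Phi_add (A B : MvPolynomial (Fin 3) F) : Phi F q (A + B) = Phi F q A + Phi F q B := by
  simp only [Phi, map_add]
  ring

lemma Phi_mul (A B : MvPolynomial (Fin 3) F) :
    Phi F q (A * B) = A * Phi F q B + B * Phi F q A := by
  simp only [Phi, pderiv_mul]
  ring

lemma Phi_pow (A : MvPolynomial (Fin 3) F) (n : ℕ) :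
    Phi F q (A ^ n) = n * A ^ (n - 1) * Phi F q A := by
  simp only [Phi, pderiv_pow]
  ring

lemma Phi_X (k : Fin 3) : Phi F q (X k) = X k ^ q := by
  fin_cases k <;> simp [Phi, pderiv_X]

lemma Phi_linearForm (c₀ c₁ c₂ : F) :
    Phi F q (C c₀ * X 0 + C c₁ * X 1 + C c₂ * X 2) =
      C c₀ * X 0 ^ q + C c₁ * X 1 ^ q + C c₂ * X 2 ^ q := by
  simp [Phi, pderiv_X, mul_comm]

lemma dvd_Phi_of_dvd {Q A : MvPolynomial (Fin 3) F} (hQ : Q ∣ Phi F q Q) (hA : Q ∣ A) :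
    Q ∣ Phi F q A := by
  obtain ⟨B, rfl⟩ := hA
  rw [Phi_mul]
  exact dvd_add (dvd_mul_right Q _) (hQ.mul_left B)

lemma Phi_pow_of_Phi_eq_pow {A : MvPolynomial (Fin 3) F} (hA : Phi F q A = A ^ q) {d : ℕ}
    (hq : q = 2 * d + 1) : Phi F q (A ^ d) = d * (A ^ d) ^ 3 := by
  rw [Phi_pow, hA, hq]
  rcases d with _ | d
  · simp
  · rw [Nat.add_sub_cancel]
    ring

end Phi

lemma Phi_fermatSlice {F : Type} [Field F] {p n d : ℕ} [Fact p.Prime] [CharP F p]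
    (hq : p ^ n = 2 * d + 1) {e₀ e₁ e₂ : F}
    (h₀ : e₀ ^ p ^ n = e₀) (h₁ : e₁ ^ p ^ n = e₁) (h₂ : e₂ ^ p ^ n = e₂) :
    Phi F (p ^ n) (fermatSlice F d e₀ e₁ e₂) =
      (d : MvPolynomial (Fin 3) F) * ((X 0 ^ d) ^ 3 + (X 1 ^ d) ^ 3 + (X 2 ^ d) ^ 3 +
        ((C e₀ * X 0 + C e₁ * X 1 + C e₂ * X 2) ^ d) ^ 3) := by
  have hL : Phi F (p ^ n) (C e₀ * X 0 + C e₁ * X 1 + C e₂ * X 2) =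
      (C e₀ * X 0 + C e₁ * X 1 + C e₂ * X 2) ^ p ^ n := by
    rw [Phi_linearForm, add_pow_char_pow, add_pow_char_pow, mul_pow, mul_pow, mul_pow,
      ← C_pow, ← C_pow, ← C_pow, h₀, h₁, h₂]
  simp only [fermatSlice, Phi_add, Phi_pow_of_Phi_eq_pow _ (Phi_X _ _) hq,
    Phi_pow_of_Phi_eq_pow _ hL hq]
  ring

lemma add_add_add_dvd_sum_cubes {R : Type*} [CommRing R] (a b c e : R) :
    a + b + c + e ∣ a ^ 3 + b ^ 3 + c ^ 3 + e ^ 3 + 3 * ((a + b) * (b + c) * (a + c)) :=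
  ⟨e ^ 2 - e * (a + b + c) + (a + b + c) ^ 2, by ring⟩

lemma dvd_prod_of_dvd_fermatSlice {F : Type} [Field F] [Fintype F] {p n d : ℕ} [Fact p.Prime]
    [CharP F p] (hcard : Fintype.card F = p ^ n) (hq : p ^ n = 2 * d + 1)
    (h3d : (3 * d : F) ≠ 0) (e₀ e₁ e₂ : F) {Q : MvPolynomial (Fin 3) F}
    (hC : Q ∣ fermatSlice F d e₀ e₁ e₂) (hPhi : Q ∣ Phi F (p ^ n) Q) :
    Q ∣ (X 0 ^ d + X 1 ^ d) * (X 1 ^ d + X 2 ^ d) * (X 0 ^ d + X 2 ^ d) := by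
  have hfrob : ∀ e : F, e ^ p ^ n = e := fun e => hcard ▸ FiniteField.pow_card e
  have hPhiC := dvd_Phi_of_dvd _ hPhi hC
  rw [Phi_fermatSlice hq (hfrob e₀) (hfrob e₁) (hfrob e₂)] at hPhiC
  have hcubes := (hC.trans (add_add_add_dvd_sum_cubes _ _ _ _)).mul_left (d : MvPolynomial _ F)
  have hunit : IsUnit (C (3 * d : F) : MvPolynomial (Fin 3) F) := (Ne.isUnit h3d).map C
  rw [← hunit.dvd_mul_left]
  convert dvd_sub hcubes hPhiC using 1
  simp only [map_mul, map_natCast, map_ofNat]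
  ring

lemma Polynomial.homogenize_multiset_prod_X_sub_C {R : Type*} [CommRing R] [Nontrivial R]
    (s : Multiset R) :
    (s.map fun r => X - C r).prod.homogenize (Multiset.card s) =
      (s.map fun r => MvPolynomial.X 0 - MvPolynomial.C r * MvPolynomial.X 1).prod := by
  induction s using Multiset.induction_on with
  | empty => simp
  | cons a s ih =>
    rw [Multiset.map_cons, Multiset.prod_cons, Multiset.card_cons, add_comm,
      homogenize_mul _ _ (natDegree_X_sub_C_le a)
        (natDegree_multiset_prod_X_sub_C_eq_card s).le, ih]
    simp

lemma X_pow_add_X_pow_eq_prod {K σ : Type*} [Field K] [IsAlgClosed K] {d : ℕ} (hd : d ≠ 0)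
    (i j : σ) : ∃ s : Multiset K,
      (X i ^ d + X j ^ d : MvPolynomial σ K) = (s.map fun r => X i - C r * X j).prod := by
  have hsplit := IsAlgClosed.splits (Polynomial.X ^ d + Polynomial.C (1 : K))
  have hP := congr_arg (fun f => rename ![i, j] (f.homogenize d))
    (hsplit.eq_prod_roots_of_monic (Polynomial.monic_X_pow_add_C 1 hd))
  obtain ⟨s, hs, hcard⟩ : ∃ s, (Polynomial.X ^ d + Polynomial.C (1 : K)).roots = s ∧
      Multiset.card s = d :=
    ⟨_, rfl, by rw [← hsplit.natDegree_eq_card_roots, Polynomial.natDegree_X_pow_add_C]⟩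
  refine ⟨s, ?_⟩
  rw [hs, ← hcard, Polynomial.homogenize_multiset_prod_X_sub_C, hcard] at hP
  simpa [Polynomial.homogenize_X_pow, map_multiset_prod] using hP

lemma X_sub_C_mul_X_ne_zero {K σ : Type*} [Field K] {i j : σ} (hij : i ≠ j) (r : K) :
    (X i - C r * X j : MvPolynomial σ K) ≠ 0 := by
  classical
  intro h
  have := congr_arg (coeff (Finsupp.single i 1)) h
  simp [coeff_X, Finsupp.single_left_inj one_ne_zero, hij.symm] at this

lemma totalDegree_le_one_of_prime_dvd_X_pow_add_X_pow {K σ : Type*} [Field K] [IsAlgClosed K]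
    {P : MvPolynomial σ K} (hP : Prime P) {d : ℕ} (hd : d ≠ 0) {i j : σ} (hij : i ≠ j)
    (hdvd : P ∣ X i ^ d + X j ^ d) : P.totalDegree ≤ 1 := by
  obtain ⟨s, hs⟩ := X_pow_add_X_pow_eq_prod (K := K) hd i j
  rw [hs] at hdvd
  obtain ⟨r, -, hdvd⟩ := hP.exists_mem_multiset_map_dvd hdvd
  calc P.totalDegree ≤ (X i - C r * X j).totalDegree :=
        totalDegree_le_of_dvd_of_isDomain hdvd (X_sub_C_mul_X_ne_zero hij r)
    _ ≤ 1 := by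
        refine (totalDegree_sub _ _).trans (max_le (totalDegree_X _).le ?_)
        exact (totalDegree_mul _ _).trans (by simp [totalDegree_X])

lemma MvPolynomial.totalDegree_map_of_injective {R S σ : Type*} [CommSemiring R] [CommSemiring S]
    {f : R →+* S} (hf : Function.Injective f) (P : MvPolynomial σ R) :
    (map f P).totalDegree = P.totalDegree := by
  simp [totalDegree, support_map_of_injective _ hf]

theorem statement9_general (p h : ℕ) (hp : Nat.Prime p) (hp3 : 3 < p)
    (F : Type) [Field F] [Fintype F] (hcard : Fintype.card F = p ^ h)
    (d : ℕ) (hd : p ^ h = 2 * d + 1) (e0 e1 e2 : F)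
    (Q : MvPolynomial (Fin 3) F)
    (hQdeg : 2 ≤ Q.totalDegree)
    (hQabs : Irreducible (MvPolynomial.map (algebraMap F (AlgebraicClosure F)) Q))
    (hQdvd : Q ∣ fermatSlice F d e0 e1 e2) :
    ¬ Q ∣ Phi F (p ^ h) Q := by
  intro hPhi
  have := Fact.mk hp
  have := charP_of_card_eq_prime_pow hcard
  have h3d : (3 * d : F) ≠ 0 := by
    have h3 : (3 : F) ≠ 0 := by
      exact_mod_cast (CharP.cast_eq_zero_iff F p 3).not.mpr
        (Nat.not_dvd_of_pos_of_lt three_pos hp3)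
    have hq : (2 * d + 1 : F) = 0 := by exact_mod_cast hd ▸ hcard ▸ Nat.cast_card_eq_zero F
    refine mul_ne_zero h3 fun h0 => ?_
    simp [h0] at hq
  have hprod := map_dvd (map (algebraMap F (AlgebraicClosure F)))
    (dvd_prod_of_dvd_fermatSlice hcard hd h3d e0 e1 e2 hQdvd hPhi)
  simp only [map_mul, map_add, map_pow, map_X] at hprod
  have hd0 : d ≠ 0 := by rintro rfl; simp at h3d
  have hQ' := hQabs.prime
  have hle : (map (algebraMap F (AlgebraicClosure F)) Q).totalDegree ≤ 1 := by
    rcases hQ'.dvd_or_dvd hprod with h | h₀₂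
    · rcases hQ'.dvd_or_dvd h with h₀₁ | h₁₂
      · exact totalDegree_le_one_of_prime_dvd_X_pow_add_X_pow hQ' hd0 (by decide) h₀₁
      · exact totalDegree_le_one_of_prime_dvd_X_pow_add_X_pow hQ' hd0 (by decide) h₁₂
    · exact totalDegree_le_one_of_prime_dvd_X_pow_add_X_pow hQ' hd0 (by decide) h₀₂
  rw [totalDegree_map_of_injective (algebraMap F _).injective] at hle
  omega

/-- Every homogeneous factor `Q` of `C` of degree at least `2` that is
irreducible over the algebraic closure of `F_q` satisfies `Q ∤ Φ_q(Q)`; that is, every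
nonlinear absolutely irreducible component of the curve `C = 0` defined over `F_q` is
`F_q`-Frobenius classical. -/
theorem statement9 (p h : ℕ) (hp : Nat.Prime p) (hp3 : 3 < p) (hh : 0 < h)
    (F : Type) [Field F] [Fintype F] (hcard : Fintype.card F = p ^ h)
    (d : ℕ) (hd : p ^ h = 2 * d + 1) (e0 e1 e2 : F)
    (Q : MvPolynomial (Fin 3) F) (m : ℕ) (hQhom : Q.IsHomogeneous m)
    (hQdeg : 2 ≤ Q.totalDegree)
    (hQabs : Irreducible (MvPolynomial.map (algebraMap F (AlgebraicClosure F)) Q))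
    (hQdvd : Q ∣ fermatSlice F d e0 e1 e2) :
    ¬ Q ∣ Phi F (p ^ h) Q :=
  statement9_general p h hp hp3 F hcard d hd e0 e1 e2 Q hQdeg hQabs hQdvd
end

section
/- Suppose d is odd and exactly one of η(e0), η(e1), η(e2) equals -1 while the other two equal 1. Then the number of points (x0 : x1 : x2) ∈ ℙ²(F_q) with C(x0, x1, x2) = 0 equals (3q² - 6q + 23)/8; equivalently, writing n = (q-3)/2 for the degree of the nonlinear part of C, it equals n(n + q - 1)/2 + (q + 1). -/
open MvPolynomial

/-!
Since `u ^ d = η(u)`, the value of `C` at `x` is the image in `F` of the integer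
`η(x₀) + η(x₁) + η(x₂) + η(ℓ(x))`, `ℓ = e₀X₀ + e₁X₁ + e₂X₂`, which lies in `[-4, 4]`; as
`p ≥ 5`, `C(x) = 0` exactly when this integer vanishes. On `{-1, 0, 1}⁴` the indicator of
`a + b + c + d = 0` is a polynomial (`eight_mul_ite_add_eq_zero`), so the number of affine zeros
is a combination of the sums `∑ η(u)ⁱ η(v)ʲ η(w)ᵏ η(ℓ)ᵐ` over `F³`. Summing out one variable at a
time with the Jacobi sum `∑ₜ η(t) η(ct + A)` evaluates each of them in terms of `q` and the
characters of `e₀, e₁, e₂`; dividing the affine count by `q - 1` gives the projective one.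
-/

open Finset

section OneVariable

variable {F : Type} [Field F] [Fintype F]

lemma sum_comp_affine {M : Type*} [AddCommMonoid M] {c : F} (hc : c ≠ 0) (A : F) (g : F → M) :
    ∑ t, g (c * t + A) = ∑ t, g t := by
  simpa using Equiv.sum_comp ((Equiv.mulLeft₀ c hc).trans (Equiv.addRight A)) g

variable [DecidableEq F]

local notation "χ" => quadraticChar F
local notation "q" => (Fintype.card F : ℤ)

lemma quadraticChar_sq_eq_ite (a : F) : χ a ^ 2 = if a = 0 then 0 else 1 := by
  split_ifs with h
  · simp [h]
  · exact quadraticChar_sq_one h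

lemma one_sub_quadraticChar_sq (a : F) : 1 - χ a ^ 2 = if a = 0 then 1 else 0 := by
  rw [quadraticChar_sq_eq_ite]; split_ifs <;> norm_num

lemma quadraticChar_pow_three (a : F) : χ a ^ 3 = χ a := by
  rcases quadraticChar_isQuadratic F a with h | h | h <;> rw [h] <;> norm_num

lemma quadraticChar_mul_sq {c : F} (hc : c ≠ 0) (a : F) : χ (c * a) ^ 2 = χ a ^ 2 := by
  rw [map_mul, mul_pow, quadraticChar_sq_one hc, one_mul]

lemma quadraticChar_inv (a : F) : χ a⁻¹ = χ a := by
  rw [← MulChar.inv_apply', (quadraticChar_isQuadratic F).inv]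

lemma quadraticChar_div (a b : F) : χ (a / b) = χ a * χ b := by
  rw [div_eq_mul_inv, map_mul, quadraticChar_inv]

lemma sum_quadraticChar_sq : ∑ t : F, χ t ^ 2 = q - 1 := by
  have h (t : F) : χ t ^ 2 = 1 - if t = 0 then 1 else 0 := by
    rw [← one_sub_quadraticChar_sq]; ring
  rw [sum_congr rfl fun t _ => h t]
  simp [sum_sub_distrib]

lemma sum_ite_affine_eq_zero {M : Type*} [AddCommMonoid M] {c : F} (hc : c ≠ 0) (A : F)
    (g : F → M) :
    ∑ t, (if c * t + A = 0 then g t else 0) = g (-A / c) := by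
  have key (t : F) : c * t + A = 0 ↔ t = -A / c := by
    rw [eq_div_iff hc, add_eq_zero_iff_eq_neg, mul_comm]
  simp [key]

lemma sum_quadraticChar_affine (hF : ringChar F ≠ 2) {c : F} (hc : c ≠ 0) (A : F) :
    ∑ t, χ (c * t + A) = 0 := by
  rw [sum_comp_affine hc A (χ ·), quadraticChar_sum_zero hF]

lemma sum_quadraticChar_sq_affine {c : F} (hc : c ≠ 0) (A : F) :
    ∑ t, χ (c * t + A) ^ 2 = q - 1 := by
  rw [sum_comp_affine hc A (χ · ^ 2), sum_quadraticChar_sq]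

lemma sum_quadraticChar_mul_affine (hF : ringChar F ≠ 2) {c : F} (hc : c ≠ 0) (A : F) :
    ∑ t, χ t * χ (c * t + A) = χ c * (q * (if A = 0 then 1 else 0) - 1) := by
  by_cases hA : A = 0
  · have h (t : F) : χ t * χ (c * t) = χ c * χ t ^ 2 := by rw [map_mul]; ring
    simp only [hA, add_zero, h, ← mul_sum, sum_quadraticChar_sq, if_true, mul_one]
  · have hJ : ∑ s, χ s * χ (1 - s) = -χ (-1) := by
      rw [← jacobiSum_nontrivial_inv (quadraticChar_ne_one hF), (quadraticChar_isQuadratic F).inv,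
        jacobiSum]
    -- substituting `t = -(A / c) s` turns the sum into `χ(-c)` times the Jacobi sum `J(χ, χ)`
    have hsub (s : F) :
        χ (-A / c * s) * χ (c * (-A / c * s) + A) = χ (-1) * χ c * (χ s * χ (1 - s)) := by
      have : c * (-A / c * s) + A = A * (1 - s) := by field_simp; ring
      rw [this, neg_div, neg_eq_neg_one_mul, map_mul, map_mul, map_mul, quadraticChar_div]
      linear_combination (χ (-1) * χ s * χ c * χ (1 - s)) * quadraticChar_sq_one hA
    rw [← Equiv.sum_comp (Equiv.mulLeft₀ (-A / c) (by simp [hA, hc]))]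
    simp only [Equiv.mulLeft₀_apply, hsub, ← mul_sum, hJ, hA, if_false]
    linear_combination (-χ c) * quadraticChar_sq_one (neg_ne_zero.mpr one_ne_zero : (-1 : F) ≠ 0)

lemma sum_quadraticChar_sq_mul_sq_affine {c : F} (hc : c ≠ 0) (A : F) :
    ∑ t, χ t ^ 2 * χ (c * t + A) ^ 2 = q - 2 + (if A = 0 then 1 else 0) := by
  have h (t : F) : χ t ^ 2 * χ (c * t + A) ^ 2 =
      χ (c * t + A) ^ 2 - if t = 0 then χ A ^ 2 else 0 := by
    rw [quadraticChar_sq_eq_ite t]; split_ifs with ht <;> simp [ht]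
  simp only [h, sum_sub_distrib, sum_quadraticChar_sq_affine hc, sum_ite_eq', mem_univ, if_true,
    quadraticChar_sq_eq_ite A]
  split_ifs <;> ring

lemma sum_quadraticChar_sq_mul_affine (hF : ringChar F ≠ 2) {c : F} (hc : c ≠ 0) (A : F) :
    ∑ t, χ t ^ 2 * χ (c * t + A) = -χ A := by
  have h (t : F) : χ t ^ 2 * χ (c * t + A) = χ (c * t + A) - if t = 0 then χ A else 0 := by
    rw [quadraticChar_sq_eq_ite t]; split_ifs with ht <;> simp [ht]
  simp only [h, sum_sub_distrib, sum_quadraticChar_affine hF hc, sum_ite_eq', mem_univ, if_true,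
    zero_sub]

end OneVariable

/-! Sums over `(u, v, w) ∈ F³` involving `ℓ = αu + βv + γw`. A name lists the factor carried by
`u, v, w, ℓ` in this order: `chi` is `χ`, `sq` is `χ²`, `zero` is `1 - χ²` (the indicator of `0`),
and two `opp` stand for `χ²χ² - χχ` (twice the indicator of nonzero values of opposite
characters). -/
namespace PlaneCharSum

variable {F : Type} [Field F] [Fintype F] [DecidableEq F] {α β γ : F}

local notation "χ" => quadraticChar F
local notation "q" => (Fintype.card F : ℤ)

lemma sq_sq_sq_sq (hα : α ≠ 0) (hβ : β ≠ 0) (hγ : γ ≠ 0) :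
    ∑ u, ∑ v, ∑ w, χ u ^ 2 * χ v ^ 2 * χ w ^ 2 * χ (α * u + β * v + γ * w) ^ 2 =
      (q - 1) * (q ^ 2 - 3 * q + 3) := by
  have inner (u v : F) : ∑ w, χ u ^ 2 * χ v ^ 2 * χ w ^ 2 * χ (α * u + β * v + γ * w) ^ 2 =
      χ u ^ 2 * ((q - 2) * χ v ^ 2 + if β * v + α * u = 0 then χ v ^ 2 else 0) := by
    simp_rw [show ∀ w, α * u + β * v + γ * w = γ * w + (β * v + α * u) from fun w => by ring,
      mul_assoc, ← mul_sum, sum_quadraticChar_sq_mul_sq_affine hγ]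
    split_ifs <;> ring
  have middle (u : F) :
      ∑ v, χ u ^ 2 * ((q - 2) * χ v ^ 2 + if β * v + α * u = 0 then χ v ^ 2 else 0) =
        ((q - 2) * (q - 1) + 1) * χ u ^ 2 := by
    rw [← mul_sum, sum_add_distrib, ← mul_sum, sum_quadraticChar_sq, sum_ite_affine_eq_zero hβ,
      ← neg_mul, mul_div_right_comm, quadraticChar_mul_sq (by simp [hα, hβ])]
    linear_combination χ u * quadraticChar_pow_three u
  simp_rw [inner, middle, ← mul_sum, sum_quadraticChar_sq]
  ring

lemma chi_chi_chi_chi (hF : ringChar F ≠ 2) (hβ : β ≠ 0) (hγ : γ ≠ 0) :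
    ∑ u, ∑ v, ∑ w, χ u * χ v * χ w * χ (α * u + β * v + γ * w) =
      q * (q - 1) * χ (-(α * β * γ)) := by
  have inner (u v : F) : ∑ w, χ u * χ v * χ w * χ (α * u + β * v + γ * w) =
      χ u * (χ γ * q * (if β * v + α * u = 0 then χ v else 0) - χ γ * χ v) := by
    simp_rw [show ∀ w, α * u + β * v + γ * w = γ * w + (β * v + α * u) from fun w => by ring,
      mul_assoc, ← mul_sum, sum_quadraticChar_mul_affine hF hγ]
    split_ifs <;> ring
  have middle (u : F) :
      ∑ v, χ u * (χ γ * q * (if β * v + α * u = 0 then χ v else 0) - χ γ * χ v) =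
        χ γ * q * χ (-α / β) * χ u ^ 2 := by
    rw [← mul_sum, sum_sub_distrib, ← mul_sum, ← mul_sum, sum_ite_affine_eq_zero hβ,
      quadraticChar_sum_zero hF, ← neg_mul, mul_div_right_comm, map_mul]
    ring
  simp_rw [inner, middle, ← mul_sum, sum_quadraticChar_sq]
  rw [quadraticChar_div, ← neg_mul, ← neg_mul, map_mul, map_mul]
  ring

lemma chi_chi_sq_sq (hF : ringChar F ≠ 2) (hβ : β ≠ 0) (hγ : γ ≠ 0) :
    ∑ u, ∑ v, ∑ w, χ u * χ v * χ w ^ 2 * χ (α * u + β * v + γ * w) ^ 2 =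
      (q - 1) * χ (-(α * β)) := by
  have inner (u v : F) : ∑ w, χ u * χ v * χ w ^ 2 * χ (α * u + β * v + γ * w) ^ 2 =
      χ u * ((q - 2) * χ v + if β * v + α * u = 0 then χ v else 0) := by
    simp_rw [show ∀ w, α * u + β * v + γ * w = γ * w + (β * v + α * u) from fun w => by ring,
      mul_assoc, ← mul_sum, sum_quadraticChar_sq_mul_sq_affine hγ]
    split_ifs <;> ring
  have middle (u : F) :
      ∑ v, χ u * ((q - 2) * χ v + if β * v + α * u = 0 then χ v else 0) =
        χ (-α / β) * χ u ^ 2 := by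
    rw [← mul_sum, sum_add_distrib, ← mul_sum, sum_ite_affine_eq_zero hβ,
      quadraticChar_sum_zero hF, ← neg_mul, mul_div_right_comm, map_mul]
    ring
  simp_rw [inner, middle, ← mul_sum, sum_quadraticChar_sq]
  rw [quadraticChar_div, ← neg_mul, map_mul]
  ring

lemma chi_sq_sq_chi (hF : ringChar F ≠ 2) (hβ : β ≠ 0) (hγ : γ ≠ 0) :
    ∑ u, ∑ v, ∑ w, χ u * χ (α * u + β * v + γ * w) * χ v ^ 2 * χ w ^ 2 = (q - 1) * χ α := by
  have inner (u v : F) : ∑ w, χ u * χ (α * u + β * v + γ * w) * χ v ^ 2 * χ w ^ 2 =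
      χ u * χ v ^ 2 * -χ (β * v + α * u) := by
    rw [← sum_quadraticChar_sq_mul_affine hF hγ, mul_sum]
    refine sum_congr rfl fun w _ => ?_
    rw [show α * u + β * v + γ * w = γ * w + (β * v + α * u) by ring]
    ring
  have middle (u : F) : ∑ v, χ u * χ v ^ 2 * -χ (β * v + α * u) = χ α * χ u ^ 2 := by
    rw [sum_congr rfl fun v _ => show χ u * χ v ^ 2 * -χ (β * v + α * u) =
        -χ u * (χ v ^ 2 * χ (β * v + α * u)) by ring,
      ← mul_sum, sum_quadraticChar_sq_mul_affine hF hβ, map_mul]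
    ring
  simp_rw [inner, middle, ← mul_sum, sum_quadraticChar_sq]
  ring

lemma zero_zero_zero_zero :
    ∑ u, ∑ v, ∑ w, (1 - χ u ^ 2) * (1 - χ v ^ 2) * (1 - χ w ^ 2) *
      (1 - χ (α * u + β * v + γ * w) ^ 2) = 1 := by
  simp only [one_sub_quadraticChar_sq, ite_mul, one_mul, zero_mul, sum_ite_irrel, sum_const_zero,
    sum_ite_eq', mem_univ, if_true, mul_zero, add_zero]

lemma zero_zero_opp_opp (hγ : γ ≠ 0) :
    ∑ u, ∑ v, ∑ w, (1 - χ u ^ 2) * (1 - χ v ^ 2) *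
      (χ w ^ 2 * χ (α * u + β * v + γ * w) ^ 2 - χ w * χ (α * u + β * v + γ * w)) =
      (q - 1) * (1 - χ γ) := by
  simp only [one_sub_quadraticChar_sq, ite_mul, one_mul, zero_mul, sum_ite_irrel, sum_const_zero,
    sum_ite_eq', mem_univ, if_true, mul_zero, zero_add]
  rw [sum_congr rfl fun w _ => show χ w ^ 2 * χ (γ * w) ^ 2 - χ w * χ (γ * w) =
      (1 - χ γ) * χ w ^ 2 by
    rw [map_mul]; linear_combination χ γ ^ 2 * χ w * quadraticChar_pow_three w
      + χ w ^ 2 * quadraticChar_sq_one hγ]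
  rw [← mul_sum, sum_quadraticChar_sq]
  ring

lemma zero_opp_opp_zero (hβ : β ≠ 0) (hγ : γ ≠ 0) :
    ∑ u, ∑ v, ∑ w, (1 - χ u ^ 2) * (1 - χ (α * u + β * v + γ * w) ^ 2) *
      (χ v ^ 2 * χ w ^ 2 - χ v * χ w) = (q - 1) * (1 - χ (-(β * γ))) := by
  simp only [one_sub_quadraticChar_sq, ite_mul, one_mul, zero_mul, sum_ite_irrel, sum_const_zero,
    sum_ite_eq', mem_univ, if_true, mul_zero, zero_add, add_comm (β * _) (γ * _)]
  simp_rw [sum_ite_affine_eq_zero hγ, ← neg_mul, mul_div_right_comm]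
  rw [sum_congr rfl fun v _ => show χ v ^ 2 * χ (-β / γ * v) ^ 2 - χ v * χ (-β / γ * v) =
      (1 - χ (-β / γ)) * χ v ^ 2 by
    rw [map_mul]; linear_combination χ (-β / γ) ^ 2 * χ v * quadraticChar_pow_three v
      + χ v ^ 2 * quadraticChar_sq_one (show -β / γ ≠ 0 by simp [hβ, hγ])]
  rw [← mul_sum, sum_quadraticChar_sq, quadraticChar_div, ← map_mul, neg_mul]
  ring

end PlaneCharSum

/-- The terms before `8 * _` vanish unless `abcd ≠ 0`; on `{±1}⁴` they equal
`3 + 3abcd - ∑ xy` (over the six pairs), which is `8` if two entries are `1` and two are `-1`, and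
`0` otherwise. The term `8 * _` accounts for `(0, 0, 0, 0)`, and `4 * _` for the points with
exactly two zero entries, the other two being opposite. -/
lemma eight_mul_ite_add_eq_zero {a b c d : ℤ} (ha : a = 0 ∨ a = 1 ∨ a = -1)
    (hb : b = 0 ∨ b = 1 ∨ b = -1) (hc : c = 0 ∨ c = 1 ∨ c = -1) (hd : d = 0 ∨ d = 1 ∨ d = -1) :
    8 * (if a + b + c + d = 0 then 1 else 0) =
      3 * (a ^ 2 * b ^ 2 * c ^ 2 * d ^ 2) + 3 * (a * b * c * d)
      - (a * b * c ^ 2 * d ^ 2 + a * c * b ^ 2 * d ^ 2 + a * d * b ^ 2 * c ^ 2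
        + b * c * a ^ 2 * d ^ 2 + b * d * a ^ 2 * c ^ 2 + c * d * a ^ 2 * b ^ 2)
      + 8 * ((1 - a ^ 2) * (1 - b ^ 2) * (1 - c ^ 2) * (1 - d ^ 2))
      + 4 * ((1 - a ^ 2) * (1 - b ^ 2) * (c ^ 2 * d ^ 2 - c * d)
        + (1 - a ^ 2) * (1 - c ^ 2) * (b ^ 2 * d ^ 2 - b * d)
        + (1 - a ^ 2) * (1 - d ^ 2) * (b ^ 2 * c ^ 2 - b * c)
        + (1 - b ^ 2) * (1 - c ^ 2) * (a ^ 2 * d ^ 2 - a * d)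
        + (1 - b ^ 2) * (1 - d ^ 2) * (a ^ 2 * c ^ 2 - a * c)
        + (1 - c ^ 2) * (1 - d ^ 2) * (a ^ 2 * b ^ 2 - a * b)) := by
  rcases ha with rfl | rfl | rfl <;> rcases hb with rfl | rfl | rfl <;>
    rcases hc with rfl | rfl | rfl <;> rcases hd with rfl | rfl | rfl <;> norm_num

section TripleSum

variable {ι R : Type*} [Fintype ι]

lemma sum₃_congr [AddCommMonoid R] {f g : ι → ι → ι → R} (h : ∀ u v w, f u v w = g u v w) :
    ∑ u, ∑ v, ∑ w, f u v w = ∑ u, ∑ v, ∑ w, g u v w := by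
  simp only [h]

lemma sum₃_add [AddCommMonoid R] (f g : ι → ι → ι → R) :
    ∑ u, ∑ v, ∑ w, (f u v w + g u v w) = ∑ u, ∑ v, ∑ w, f u v w + ∑ u, ∑ v, ∑ w, g u v w := by
  simp only [sum_add_distrib]

lemma sum₃_sub [AddCommGroup R] (f g : ι → ι → ι → R) :
    ∑ u, ∑ v, ∑ w, (f u v w - g u v w) = ∑ u, ∑ v, ∑ w, f u v w - ∑ u, ∑ v, ∑ w, g u v w := by
  simp only [sum_sub_distrib]

lemma sum₃_mul_left [NonUnitalNonAssocSemiring R] (c : R) (f : ι → ι → ι → R) :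
    ∑ u, ∑ v, ∑ w, c * f u v w = c * ∑ u, ∑ v, ∑ w, f u v w := by
  simp only [mul_sum]

lemma sum₃_comm_inner [AddCommMonoid R] (f : ι → ι → ι → R) :
    ∑ u, ∑ v, ∑ w, f u v w = ∑ u, ∑ v, ∑ w, f u w v :=
  sum_congr rfl fun _ _ => sum_comm

lemma sum₃_comm_outer [AddCommMonoid R] (f : ι → ι → ι → R) :
    ∑ u, ∑ v, ∑ w, f u v w = ∑ u, ∑ v, ∑ w, f v u w :=
  sum_comm

lemma sum₃_rotate [AddCommMonoid R] (f : ι → ι → ι → R) :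
    ∑ u, ∑ v, ∑ w, f u v w = ∑ u, ∑ v, ∑ w, f w u v := by
  rw [sum_comm]; exact sum_congr rfl fun _ _ => sum_comm

lemma sum_fin_three [AddCommMonoid R] (f : (Fin 3 → ι) → R) :
    ∑ x, f x = ∑ u, ∑ v, ∑ w, f ![u, v, w] := by
  rw [← (Fin.consEquiv fun _ => ι).sum_comp, Fintype.sum_prod_type]
  refine sum_congr rfl fun u _ => ?_
  rw [← (Fin.consEquiv fun _ => ι).sum_comp, Fintype.sum_prod_type]
  refine sum_congr rfl fun v _ => ?_
  rw [← (Fin.consEquiv fun _ => ι).sum_comp, Fintype.sum_prod_type]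
  refine sum_congr rfl fun w _ => ?_
  rw [Fintype.sum_unique]
  congr 1

end TripleSum

section AffineCount

variable {F : Type} [Field F] [Fintype F] [DecidableEq F] {e0 e1 e2 : F}

local notation "χ" => quadraticChar F
local notation "q" => (Fintype.card F : ℤ)

open PlaneCharSum

lemma sum_chi_chi_sq_sq_terms (hF : ringChar F ≠ 2) (h0 : e0 ≠ 0) (h1 : e1 ≠ 0) (h2 : e2 ≠ 0) :
    ∑ u, ∑ v, ∑ w, χ u * χ v * χ w ^ 2 * χ (e0 * u + e1 * v + e2 * w) ^ 2
      + ∑ u, ∑ v, ∑ w, χ u * χ w * χ v ^ 2 * χ (e0 * u + e1 * v + e2 * w) ^ 2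
      + ∑ u, ∑ v, ∑ w, χ u * χ (e0 * u + e1 * v + e2 * w) * χ v ^ 2 * χ w ^ 2
      + ∑ u, ∑ v, ∑ w, χ v * χ w * χ u ^ 2 * χ (e0 * u + e1 * v + e2 * w) ^ 2
      + ∑ u, ∑ v, ∑ w, χ v * χ (e0 * u + e1 * v + e2 * w) * χ u ^ 2 * χ w ^ 2
      + ∑ u, ∑ v, ∑ w, χ w * χ (e0 * u + e1 * v + e2 * w) * χ u ^ 2 * χ v ^ 2 =
      (q - 1) * (χ (-(e0 * e1)) + χ (-(e0 * e2)) + χ e0 + χ (-(e1 * e2)) + χ e1 + χ e2) := by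
  have hac : ∑ u, ∑ v, ∑ w, χ u * χ w * χ v ^ 2 * χ (e0 * u + e1 * v + e2 * w) ^ 2 =
      (q - 1) * χ (-(e0 * e2)) := by
    rw [sum₃_comm_inner]
    refine (sum₃_congr fun _ _ _ => ?_).trans (chi_chi_sq_sq hF h2 h1)
    ring_nf
  have hbc : ∑ u, ∑ v, ∑ w, χ v * χ w * χ u ^ 2 * χ (e0 * u + e1 * v + e2 * w) ^ 2 =
      (q - 1) * χ (-(e1 * e2)) := by
    rw [sum₃_rotate]
    refine (sum₃_congr fun _ _ _ => ?_).trans (chi_chi_sq_sq hF h2 h0)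
    ring_nf
  have hbd : ∑ u, ∑ v, ∑ w, χ v * χ (e0 * u + e1 * v + e2 * w) * χ u ^ 2 * χ w ^ 2 =
      (q - 1) * χ e1 := by
    rw [sum₃_comm_outer]
    refine (sum₃_congr fun _ _ _ => ?_).trans (chi_sq_sq_chi hF h0 h2)
    ring_nf
  have hcd : ∑ u, ∑ v, ∑ w, χ w * χ (e0 * u + e1 * v + e2 * w) * χ u ^ 2 * χ v ^ 2 =
      (q - 1) * χ e2 := by
    rw [sum₃_rotate, sum₃_rotate]
    refine (sum₃_congr fun _ _ _ => ?_).trans (chi_sq_sq_chi hF h0 h1)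
    ring_nf
  rw [chi_chi_sq_sq hF h1 h2, hac, chi_sq_sq_chi hF h1 h2, hbc, hbd, hcd]
  ring

lemma sum_zero_zero_opp_opp_terms (h0 : e0 ≠ 0) (h1 : e1 ≠ 0) (h2 : e2 ≠ 0) :
    ∑ u, ∑ v, ∑ w, (1 - χ u ^ 2) * (1 - χ v ^ 2) *
        (χ w ^ 2 * χ (e0 * u + e1 * v + e2 * w) ^ 2 - χ w * χ (e0 * u + e1 * v + e2 * w))
      + ∑ u, ∑ v, ∑ w, (1 - χ u ^ 2) * (1 - χ w ^ 2) *
        (χ v ^ 2 * χ (e0 * u + e1 * v + e2 * w) ^ 2 - χ v * χ (e0 * u + e1 * v + e2 * w))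
      + ∑ u, ∑ v, ∑ w, (1 - χ u ^ 2) * (1 - χ (e0 * u + e1 * v + e2 * w) ^ 2) *
        (χ v ^ 2 * χ w ^ 2 - χ v * χ w)
      + ∑ u, ∑ v, ∑ w, (1 - χ v ^ 2) * (1 - χ w ^ 2) *
        (χ u ^ 2 * χ (e0 * u + e1 * v + e2 * w) ^ 2 - χ u * χ (e0 * u + e1 * v + e2 * w))
      + ∑ u, ∑ v, ∑ w, (1 - χ v ^ 2) * (1 - χ (e0 * u + e1 * v + e2 * w) ^ 2) *
        (χ u ^ 2 * χ w ^ 2 - χ u * χ w)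
      + ∑ u, ∑ v, ∑ w, (1 - χ w ^ 2) * (1 - χ (e0 * u + e1 * v + e2 * w) ^ 2) *
        (χ u ^ 2 * χ v ^ 2 - χ u * χ v) =
      (q - 1) * (6 - (χ e2 + χ e1 + χ (-(e1 * e2)) + χ e0 + χ (-(e0 * e2)) + χ (-(e0 * e1)))) := by
  have hac : ∑ u, ∑ v, ∑ w, (1 - χ u ^ 2) * (1 - χ w ^ 2) *
      (χ v ^ 2 * χ (e0 * u + e1 * v + e2 * w) ^ 2 - χ v * χ (e0 * u + e1 * v + e2 * w)) =
      (q - 1) * (1 - χ e1) := by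
    rw [sum₃_comm_inner]
    refine (sum₃_congr fun _ _ _ => ?_).trans (zero_zero_opp_opp (α := e0) (β := e2) h1)
    ring_nf
  have hbc : ∑ u, ∑ v, ∑ w, (1 - χ v ^ 2) * (1 - χ w ^ 2) *
      (χ u ^ 2 * χ (e0 * u + e1 * v + e2 * w) ^ 2 - χ u * χ (e0 * u + e1 * v + e2 * w)) =
      (q - 1) * (1 - χ e0) := by
    rw [sum₃_rotate]
    refine (sum₃_congr fun _ _ _ => ?_).trans (zero_zero_opp_opp (α := e1) (β := e2) h0)
    ring_nf
  have hbd : ∑ u, ∑ v, ∑ w, (1 - χ v ^ 2) * (1 - χ (e0 * u + e1 * v + e2 * w) ^ 2) *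
      (χ u ^ 2 * χ w ^ 2 - χ u * χ w) = (q - 1) * (1 - χ (-(e0 * e2))) := by
    rw [sum₃_comm_outer]
    refine (sum₃_congr fun _ _ _ => ?_).trans (zero_opp_opp_zero (α := e1) h0 h2)
    ring_nf
  have hcd : ∑ u, ∑ v, ∑ w, (1 - χ w ^ 2) * (1 - χ (e0 * u + e1 * v + e2 * w) ^ 2) *
      (χ u ^ 2 * χ v ^ 2 - χ u * χ v) = (q - 1) * (1 - χ (-(e0 * e1))) := by
    rw [sum₃_rotate, sum₃_rotate]
    refine (sum₃_congr fun _ _ _ => ?_).trans (zero_opp_opp_zero (α := e2) h0 h1)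
    ring_nf
  rw [zero_zero_opp_opp h2, hac, zero_opp_opp_zero h1 h2, hbc, hbd, hcd]
  ring

lemma sum_eight_mul_ite_quadraticChar_add_eq_zero (hF : ringChar F ≠ 2) (h0 : e0 ≠ 0)
    (h1 : e1 ≠ 0) (h2 : e2 ≠ 0) :
    ∑ u, ∑ v, ∑ w,
      8 * (if χ u + χ v + χ w + χ (e0 * u + e1 * v + e2 * w) = 0 then 1 else 0) =
      8 + (q - 1) * (3 * q ^ 2 - 9 * q + 33 + 3 * q * χ (-(e0 * e1 * e2))
        - 5 * (χ (-(e0 * e1)) + χ (-(e0 * e2)) + χ (-(e1 * e2)) + χ e0 + χ e1 + χ e2)) := by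
  have hχ := quadraticChar_isQuadratic F
  rw [sum₃_congr fun u v w => eight_mul_ite_add_eq_zero (hχ u) (hχ v) (hχ w) (hχ _)]
  simp only [sum₃_add, sum₃_sub, sum₃_mul_left]
  rw [sq_sq_sq_sq h0 h1 h2, chi_chi_chi_chi hF h1 h2, sum_chi_chi_sq_sq_terms hF h0 h1 h2,
    zero_zero_zero_zero, sum_zero_zero_opp_opp_terms h0 h1 h2]
  ring

end AffineCount

open scoped LinearAlgebra.Projectivization in
lemma Projectivization.card_subtype_rep_mul_card_units {k V : Type*} [DivisionRing k]
    [AddCommGroup V] [Module k V] (S : V → Prop) (hS : ∀ (a : kˣ) (v : V), S (a • v) ↔ S v) :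
    Nat.card {P : ℙ k V // S P.rep} * Nat.card kˣ = Nat.card {v : V // v ≠ 0 ∧ S v} := by
  rw [← Nat.card_prod]
  refine Nat.card_congr (Equiv.prodSubtypeFstEquivSubtypeProd.symm.trans ?_)
  refine (((nonZeroEquivProjectivizationProdUnits k V).subtypeEquiv fun v => ?_).symm).trans
    (Equiv.subtypeSubtypeEquivSubtypeInter (· ≠ 0) S)
  obtain ⟨a, ha⟩ := exists_smul_eq_mk_rep k v.1 v.2
  change S v.1 ↔ S (mk k v.1 v.2).rep
  rw [← ha, hS]

section Curve

variable {F : Type} [Field F] [Fintype F] [DecidableEq F]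

local notation "χ" => quadraticChar F
local notation "q" => (Fintype.card F : ℤ)

def quadraticCharSum (e0 e1 e2 : F) (x : Fin 3 → F) : ℤ :=
  χ (x 0) + χ (x 1) + χ (x 2) + χ (e0 * x 0 + e1 * x 1 + e2 * x 2)

lemma quadraticCharSum_smul (e0 e1 e2 a : F) (x : Fin 3 → F) :
    quadraticCharSum e0 e1 e2 (a • x) = χ a * quadraticCharSum e0 e1 e2 x := by
  simp only [quadraticCharSum, Pi.smul_apply, smul_eq_mul,
    show e0 * (a * x 0) + e1 * (a * x 1) + e2 * (a * x 2) = a * (e0 * x 0 + e1 * x 1 + e2 * x 2)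
      by ring, map_mul]
  ring

lemma abs_quadraticCharSum_le (e0 e1 e2 : F) (x : Fin 3 → F) :
    |quadraticCharSum e0 e1 e2 x| ≤ 4 := by
  have h (a : F) : |χ a| ≤ 1 := by
    rcases quadraticChar_isQuadratic F a with h | h | h <;> simp [h]
  unfold quadraticCharSum
  grw [abs_add_le, abs_add_le, abs_add_le, h, h, h, h]
  norm_num

lemma eight_mul_card_quadraticCharSum_eq_zero (hF : ringChar F ≠ 2) {e0 e1 e2 : F}
    (h0 : e0 ≠ 0) (h1 : e1 ≠ 0) (h2 : e2 ≠ 0) :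
    8 * (#{x | quadraticCharSum e0 e1 e2 x = 0} : ℤ) =
      8 + (q - 1) * (3 * q ^ 2 - 9 * q + 33 + 3 * q * χ (-(e0 * e1 * e2))
        - 5 * (χ (-(e0 * e1)) + χ (-(e0 * e2)) + χ (-(e1 * e2)) + χ e0 + χ e1 + χ e2)) := by
  rw [← sum_eight_mul_ite_quadraticChar_add_eq_zero hF h0 h1 h2, card_filter, Nat.cast_sum,
    mul_sum, sum_fin_three]
  simp [quadraticCharSum]

open scoped LinearAlgebra.Projectivization in
lemma eight_mul_card_projective_quadraticCharSum_eq_zero (hF : ringChar F ≠ 2) {e0 e1 e2 : F}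
    (h0 : e0 ≠ 0) (h1 : e1 ≠ 0) (h2 : e2 ≠ 0) :
    8 * (Nat.card {P : ℙ F (Fin 3 → F) // quadraticCharSum e0 e1 e2 P.rep = 0} : ℤ) =
      3 * q ^ 2 - 9 * q + 33 + 3 * q * χ (-(e0 * e1 * e2))
        - 5 * (χ (-(e0 * e1)) + χ (-(e0 * e2)) + χ (-(e1 * e2)) + χ e0 + χ e1 + χ e2) := by
  have hcone := Projectivization.card_subtype_rep_mul_card_units (k := F)
    (fun x : Fin 3 → F => quadraticCharSum e0 e1 e2 x = 0) fun a x => by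
      rw [Units.smul_def, quadraticCharSum_smul, mul_eq_zero, quadraticChar_eq_zero_iff]
      simp
  have hnonzero : Nat.card {x : Fin 3 → F // x ≠ 0 ∧ quadraticCharSum e0 e1 e2 x = 0} + 1 =
      #{x | quadraticCharSum e0 e1 e2 x = 0} := by
    have hmem : (0 : Fin 3 → F) ∈ ({x | quadraticCharSum e0 e1 e2 x = 0} : Finset _) := by
      simp [quadraticCharSum]
    rw [Nat.card_eq_fintype_card, Fintype.card_subtype, ← card_erase_add_one hmem]
    congr 2
    ext x
    simp [and_comm]
  have hq : 1 < Fintype.card F := Fintype.one_lt_card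
  have haffine := eight_mul_card_quadraticCharSum_eq_zero hF h0 h1 h2
  rw [← hnonzero, ← hcone, Nat.card_eq_fintype_card (α := Fˣ), Fintype.card_units] at haffine
  push_cast [Nat.cast_sub hq.le] at haffine
  have hq1 : q - 1 ≠ 0 := by
    have : (1 : ℤ) < q := by exact_mod_cast hq
    linarith
  exact mul_right_cancel₀ hq1 (by linear_combination haffine)

lemma eval_fermatSlice (hF : ringChar F ≠ 2) {d : ℕ} (hd : Fintype.card F = 2 * d + 1)
    (e0 e1 e2 : F) (x : Fin 3 → F) :
    MvPolynomial.eval x (fermatSlice F d e0 e1 e2) = quadraticCharSum e0 e1 e2 x := by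
  have hd' : Fintype.card F / 2 = d := by omega
  simp only [fermatSlice, quadraticCharSum, map_add, map_pow, map_mul, eval_X, eval_C,
    Int.cast_add, quadraticChar_eq_pow_of_char_ne_two' hF, hd']

lemma eval_fermatSlice_eq_zero_iff {p : ℕ} [CharP F p] (hp : 4 < p) {d : ℕ}
    (hd : Fintype.card F = 2 * d + 1) (e0 e1 e2 : F) (x : Fin 3 → F) :
    MvPolynomial.eval x (fermatSlice F d e0 e1 e2) = 0 ↔ quadraticCharSum e0 e1 e2 x = 0 := by
  have hF : ringChar F ≠ 2 := by rw [ringChar.eq F p]; omega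
  rw [eval_fermatSlice hF hd, CharP.intCast_eq_zero_iff F p]
  refine ⟨fun hdvd => Int.eq_zero_of_abs_lt_dvd hdvd ?_, fun h => h ▸ dvd_zero _⟩
  exact (abs_quadraticCharSum_le e0 e1 e2 x).trans_lt (by exact_mod_cast hp)

lemma quadraticChar_eq_one_of_pow_eq_one (hF : ringChar F ≠ 2) {d : ℕ}
    (hd : Fintype.card F = 2 * d + 1) {a : F} (ha : a ^ d = 1) : χ a = 1 := by
  have hd0 : d ≠ 0 := by have := Fintype.one_lt_card (α := F); omega
  rw [quadraticChar_eq_pow_of_char_ne_two hF (ne_zero_pow hd0 (by simp [ha])),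
    show Fintype.card F / 2 = d by omega, if_pos ha]

lemma quadraticChar_eq_neg_one_of_pow_eq_neg_one (hF : ringChar F ≠ 2) {d : ℕ}
    (hd : Fintype.card F = 2 * d + 1) {a : F} (ha : a ^ d = -1) : χ a = -1 := by
  have hd0 : d ≠ 0 := by have := Fintype.one_lt_card (α := F); omega
  rw [quadraticChar_eq_pow_of_char_ne_two hF (ne_zero_pow hd0 (by simp [ha])),
    show Fintype.card F / 2 = d by omega, ha, if_neg (Ring.neg_one_ne_one_of_char_ne_two hF)]

lemma quadraticChar_neg_of_odd {d : ℕ} (hd : Fintype.card F = 2 * d + 1) (hodd : Odd d)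
    (a : F) : χ (-a) = -χ a := by
  have hneg : χ (-1) = -1 := by
    rw [quadraticChar_neg_one_iff_not_isSquare, FiniteField.isSquare_neg_one_iff, hd]
    obtain ⟨k, rfl⟩ := hodd
    omega
  rw [neg_eq_neg_one_mul, map_mul, hneg, neg_one_mul]

end Curve

theorem statement15_general (p h : ℕ) (hp : Nat.Prime p) (hp3 : 3 < p)
    (F : Type) [Field F] [Fintype F] (hcard : Fintype.card F = p ^ h)
    (d : ℕ) (hd : p ^ h = 2 * d + 1) (hodd : Odd d) (e0 e1 e2 : F)
    (hcase :
      (e0 ^ d = -1 ∧ e1 ^ d = 1 ∧ e2 ^ d = 1) ∨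
      (e0 ^ d = 1 ∧ e1 ^ d = -1 ∧ e2 ^ d = 1) ∨
      (e0 ^ d = 1 ∧ e1 ^ d = 1 ∧ e2 ^ d = -1)) :
    (8 * Nat.card {x : Projectivization F (Fin 3 → F) //
        MvPolynomial.eval x.rep (fermatSlice F d e0 e1 e2) = 0} : ℤ) =
      3 * (p ^ h : ℤ) ^ 2 - 6 * (p ^ h : ℤ) + 23 := by
  classical
  have := Fact.mk hp
  have := charP_of_card_eq_prime_pow hcard
  have hp4 : 4 < p := lt_of_le_of_ne hp3 fun h4 => by subst h4; norm_num at hp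
  have hF : ringChar F ≠ 2 := by rw [ringChar.eq F p]; omega
  have hq : Fintype.card F = 2 * d + 1 := hcard.trans hd
  have hd0 : d ≠ 0 := hodd.pos.ne'
  simp_rw [eval_fermatSlice_eq_zero_iff hp4 hq]
  rcases hcase with ⟨h0, h1, h2⟩ | ⟨h0, h1, h2⟩ | ⟨h0, h1, h2⟩ <;>
    rw [eight_mul_card_projective_quadraticCharSum_eq_zero hF (ne_zero_pow hd0 (by simp [h0]))
      (ne_zero_pow hd0 (by simp [h1])) (ne_zero_pow hd0 (by simp [h2]))] <;>
    simp only [quadraticChar_neg_of_odd hq hodd, map_mul, quadraticChar_eq_one_of_pow_eq_one hF hq,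
      quadraticChar_eq_neg_one_of_pow_eq_neg_one hF hq, h0, h1, h2] <;>
    push_cast [hcard] <;> ring

/-- If `d` is odd and exactly one of `η(e0), η(e1), η(e2)` equals `-1` while
the other two equal `1`, then the number of points of `ℙ²(F_q)` on the curve `C = 0`
equals `(3q² - 6q + 23)/8` (i.e. `n(n + q - 1)/2 + (q + 1)` with `n = (q-3)/2`). -/
theorem statement15 (p h : ℕ) (hp : Nat.Prime p) (hp3 : 3 < p) (hh : 0 < h)
    (F : Type) [Field F] [Fintype F] (hcard : Fintype.card F = p ^ h)
    (d : ℕ) (hd : p ^ h = 2 * d + 1) (hodd : Odd d) (e0 e1 e2 : F)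
    (hcase :
      (e0 ^ d = -1 ∧ e1 ^ d = 1 ∧ e2 ^ d = 1) ∨
      (e0 ^ d = 1 ∧ e1 ^ d = -1 ∧ e2 ^ d = 1) ∨
      (e0 ^ d = 1 ∧ e1 ^ d = 1 ∧ e2 ^ d = -1)) :
    (8 * Nat.card {x : Projectivization F (Fin 3 → F) //
        MvPolynomial.eval x.rep (fermatSlice F d e0 e1 e2) = 0} : ℤ) =
      3 * (p ^ h : ℤ) ^ 2 - 6 * (p ^ h : ℤ) + 23 :=
  statement15_general p h hp hp3 F hcard d hd hodd e0 e1 e2 hcase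
end
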